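/- arXiv:2507.06440 — 3 statements merged into one kernel-verified Lean document; each statement's English description precedes it below -/
import Mathlib

section
/- Let C ∈ ℝ^{N×(N−1)} be a fixed matrix, and let σ ≥ 0 and ρ > 0 be real constants. Then the augmented Lagrangian function ℒ_ρ(w, σ) = λ_max(Cᵀ·diag(w)·C) + (ρ/2)·( max{ 0, 1 − λ_min(Cᵀ·diag(w)·C) + σ/ρ } )² is a convex function of w ∈ ℝ^N. -/
/-!
Both spectral extremes are extreme values of the Rayleigh quotient:
`λ_max(M) = max_{‖z‖ = 1} zᵀ M z` and `λ_min(M) = min_{‖z‖ = 1} zᵀ M z`. Since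
`w ↦ zᵀ Cᵀ diag(w) C z` is linear, `λ_max` is a supremum of linear functions of `w`, hence
convex, and `λ_min` is concave. The penalty `max {0, 1 - λ_min + σ/ρ}` is then a nonnegative
convex function, so its square is convex too.
-/

open Matrix Set

namespace Matrix.IsHermitian

variable {n : Type*} [Fintype n] [DecidableEq n] {A : Matrix n n ℝ} (hA : A.IsHermitian)

theorem exists_dotProduct_mulVec_eq_sum_eigenvalues (x : n → ℝ) :
    ∃ y : n → ℝ, x ⬝ᵥ A *ᵥ x = ∑ i, hA.eigenvalues i * y i ^ 2 ∧ x ⬝ᵥ x = ∑ i, y i ^ 2 := by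
  set U : Matrix n n ℝ := ↑hA.eigenvectorUnitary with hU
  have hstar : star U = Uᵀ := by
    rw [star_eq_conjTranspose, conjTranspose_eq_transpose_of_trivial]
  have hUUt : U * Uᵀ = 1 := by
    rw [← hstar]; exact mem_unitaryGroup_iff.mp hA.eigenvectorUnitary.2
  refine ⟨Uᵀ *ᵥ x, ?_, ?_⟩
  · conv_lhs => rw [hA.spectral_theorem]
    rw [Unitary.conjStarAlgAut_apply, ← hU, hstar, ← mulVec_mulVec, ← mulVec_mulVec,
      dotProduct_mulVec, ← mulVec_transpose]
    simp only [dotProduct, mulVec_diagonal, Function.comp_apply, RCLike.ofReal_real_eq_id, id_eq]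
    exact Finset.sum_congr rfl fun i _ => by ring
  · have hnorm : (Uᵀ *ᵥ x) ⬝ᵥ (Uᵀ *ᵥ x) = x ⬝ᵥ x := by
      rw [dotProduct_mulVec, vecMul_transpose, mulVec_mulVec, hUUt, one_mulVec]
    rw [← hnorm, dotProduct]
    exact Finset.sum_congr rfl fun i _ => by ring

theorem dotProduct_mulVec_le_iSup_eigenvalues {x : n → ℝ} (hx : x ⬝ᵥ x = 1) :
    x ⬝ᵥ A *ᵥ x ≤ ⨆ i, hA.eigenvalues i := by
  obtain ⟨y, hquad, hnorm⟩ := hA.exists_dotProduct_mulVec_eq_sum_eigenvalues x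
  rw [hquad, ← mul_one (⨆ i, _), ← hx, hnorm, Finset.mul_sum]
  exact Finset.sum_le_sum fun i _ =>
    mul_le_mul_of_nonneg_right (le_ciSup (finite_range _).bddAbove i) (sq_nonneg _)

theorem iInf_eigenvalues_le_dotProduct_mulVec {x : n → ℝ} (hx : x ⬝ᵥ x = 1) :
    ⨅ i, hA.eigenvalues i ≤ x ⬝ᵥ A *ᵥ x := by
  obtain ⟨y, hquad, hnorm⟩ := hA.exists_dotProduct_mulVec_eq_sum_eigenvalues x
  rw [hquad, ← mul_one (⨅ i, _), ← hx, hnorm, Finset.mul_sum]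
  exact Finset.sum_le_sum fun i _ =>
    mul_le_mul_of_nonneg_right (ciInf_le (finite_range _).bddBelow i) (sq_nonneg _)

theorem exists_dotProduct_self_eq_one_eigenvalues_eq (i : n) :
    ∃ z : n → ℝ, z ⬝ᵥ z = 1 ∧ hA.eigenvalues i = z ⬝ᵥ A *ᵥ z := by
  refine ⟨hA.eigenvectorBasis i, ?_, by simpa using hA.eigenvalues_eq i⟩
  have hinner : inner ℝ (hA.eigenvectorBasis i) (hA.eigenvectorBasis i) = 1 := by
    rw [real_inner_self_eq_norm_mul_norm, hA.eigenvectorBasis.orthonormal.1 i, mul_one]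
  rwa [EuclideanSpace.inner_eq_star_dotProduct, star_trivial] at hinner

end Matrix.IsHermitian

section LinearFamily

variable {E n : Type*} [AddCommGroup E] [Module ℝ E] [Fintype n] (A : E →ₗ[ℝ] Matrix n n ℝ)

theorem dotProduct_mulVec_map_add_smul (z : n → ℝ) (x y : E) (a b : ℝ) :
    z ⬝ᵥ A (a • x + b • y) *ᵥ z = a * (z ⬝ᵥ A x *ᵥ z) + b * (z ⬝ᵥ A y *ᵥ z) := by
  simp only [map_add, map_smul, add_mulVec, smul_mulVec, dotProduct_add, dotProduct_smul,
    smul_eq_mul]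

variable [DecidableEq n] (hA : ∀ x, (A x).IsHermitian)

theorem convexOn_iSup_eigenvalues :
    ConvexOn ℝ univ fun x => ⨆ i, (hA x).eigenvalues i := by
  cases isEmpty_or_nonempty n
  · simpa only [Real.iSup_of_isEmpty] using convexOn_const (0 : ℝ) convex_univ
  refine ⟨convex_univ, fun x _ y _ a b ha hb _ => ciSup_le fun i => ?_⟩
  obtain ⟨z, hz, heq⟩ := (hA (a • x + b • y)).exists_dotProduct_self_eq_one_eigenvalues_eq i
  rw [heq, dotProduct_mulVec_map_add_smul, smul_eq_mul, smul_eq_mul]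
  gcongr
  · exact (hA x).dotProduct_mulVec_le_iSup_eigenvalues hz
  · exact (hA y).dotProduct_mulVec_le_iSup_eigenvalues hz

theorem concaveOn_iInf_eigenvalues :
    ConcaveOn ℝ univ fun x => ⨅ i, (hA x).eigenvalues i := by
  cases isEmpty_or_nonempty n
  · simpa only [Real.iInf_of_isEmpty] using concaveOn_const (0 : ℝ) convex_univ
  refine ⟨convex_univ, fun x _ y _ a b ha hb _ => le_ciInf fun i => ?_⟩
  obtain ⟨z, hz, heq⟩ := (hA (a • x + b • y)).exists_dotProduct_self_eq_one_eigenvalues_eq i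
  rw [heq, dotProduct_mulVec_map_add_smul, smul_eq_mul, smul_eq_mul]
  gcongr
  · exact (hA x).iInf_eigenvalues_le_dotProduct_mulVec hz
  · exact (hA y).iInf_eigenvalues_le_dotProduct_mulVec hz

end LinearFamily

theorem augmented_lagrangian_convex_general
    {N : ℕ} (C : Matrix (Fin N) (Fin (N - 1)) ℝ)
    (herm : ∀ w : Fin N → ℝ, (Cᵀ * Matrix.diagonal w * C).IsHermitian)
    (σ ρ : ℝ) (hρ : 0 < ρ) :
    ConvexOn ℝ Set.univ (fun w : Fin N → ℝ =>
      (⨆ i, (herm w).eigenvalues i) +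
        ρ / 2 * (max 0 (1 - (⨅ i, (herm w).eigenvalues i) + σ / ρ)) ^ 2) := by
  let A : (Fin N → ℝ) →ₗ[ℝ] Matrix (Fin (N - 1)) (Fin (N - 1)) ℝ :=
    mulRightLinearMap _ ℝ C ∘ₗ mulLeftLinearMap _ ℝ Cᵀ ∘ₗ diagonalLinearMap (Fin N) ℝ ℝ
  have hmin : ConcaveOn ℝ univ fun w => ⨅ i, (herm w).eigenvalues i :=
    concaveOn_iInf_eigenvalues A herm
  have hpenalty : ConvexOn ℝ univ fun w => max 0 (1 - (⨅ i, (herm w).eigenvalues i) + σ / ρ) :=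
    (convexOn_const 0 convex_univ).sup <|
      (hmin.neg.add_const (1 + σ / ρ)).congr fun w _ => by
        simp only [Pi.add_apply, Pi.neg_apply]
        ring
  exact (convexOn_iSup_eigenvalues A herm).add
    ((hpenalty.pow (fun _ _ => le_max_left _ _) 2).smul (by positivity))

/-- For a fixed matrix `C ∈ ℝ^{N×(N-1)}` and constants `σ ≥ 0`, `ρ > 0`, the augmented
Lagrangian `w ↦ λ_max(Cᵀ diag(w) C) + (ρ/2) * (max {0, 1 - λ_min(Cᵀ diag(w) C) + σ/ρ})²`
is a convex function of `w ∈ ℝ^N`. -/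
theorem augmented_lagrangian_convex
    {N : ℕ} (C : Matrix (Fin N) (Fin (N - 1)) ℝ)
    (herm : ∀ w : Fin N → ℝ, (Cᵀ * Matrix.diagonal w * C).IsHermitian)
    (σ ρ : ℝ) (hσ : 0 ≤ σ) (hρ : 0 < ρ) :
    ConvexOn ℝ Set.univ (fun w : Fin N → ℝ =>
      (⨆ i, (herm w).eigenvalues i) +
        ρ / 2 * (max 0 (1 - (⨅ i, (herm w).eigenvalues i) + σ / ρ)) ^ 2) :=
  augmented_lagrangian_convex_general C herm σ ρ hρ
end

section
/- Let 0 < a ≤ b be real numbers. Then for every r > 0, max{ |1 − a/r|, |1 − b/r| } ≥ (b − a)/(a + b), with equality if and only if r = (a + b)/2. Moreover, for r* = (a + b)/2 and every λ ∈ [a, b], one has |1 − λ/r*| ≤ (b − a)/(a + b). Consequently, if 0 < λ_2 ≤ λ_3 ≤ … ≤ λ_N are the nonzero eigenvalues of the Laplacian of a connected graph, the minimizer of r ↦ max_{i=2,…,N} |1 − λ_i/r| over r > 0 is r* = (λ_N + λ_2)/2 with optimal value ρ* = (λ_N − λ_2)/(λ_N + λ_2). -/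
lemma aux_lb (a b : ℝ) (ha : 0 < a) (hab : a ≤ b) (r : ℝ) (hr : 0 < r) :
    (b - a) / (a + b) ≤ max |1 - a / r| |1 - b / r| := by
  have hb : 0 < b := lt_of_lt_of_le ha hab
  have hs : 0 < a + b := by linarith
  rcases le_or_gt r ((a + b) / 2) with h | h
  · refine le_trans ?_ (le_max_right _ _)
    have h1 : b / ((a + b) / 2) ≤ b / r :=
      div_le_div_of_nonneg_left hb.le hr h
    have h2 : b / ((a + b) / 2) = 2 * b / (a + b) := by field_simp
    have h3 : (b - a) / (a + b) = 2 * b / (a + b) - 1 := by field_simp; ring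
    calc (b - a) / (a + b) = 2 * b / (a + b) - 1 := h3
      _ ≤ b / r - 1 := by rw [h2] at h1; linarith
      _ ≤ |b / r - 1| := le_abs_self _
      _ = |1 - b / r| := by rw [abs_sub_comm]
  · refine le_trans ?_ (le_max_left _ _)
    have h1 : a / r ≤ a / ((a + b) / 2) :=
      div_le_div_of_nonneg_left ha.le (by linarith) h.le
    have h2 : a / ((a + b) / 2) = 2 * a / (a + b) := by field_simp
    have h3 : (b - a) / (a + b) = 1 - 2 * a / (a + b) := by field_simp; ring
    calc (b - a) / (a + b) = 1 - 2 * a / (a + b) := h3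
      _ ≤ 1 - a / r := by rw [h2] at h1; linarith
      _ ≤ |1 - a / r| := le_abs_self _

lemma aux_icc (a b : ℝ) (ha : 0 < a) (hab : a ≤ b) (lam : ℝ) (hl : lam ∈ Set.Icc a b) :
    |1 - lam / ((a + b) / 2)| ≤ (b - a) / (a + b) := by
  have hb : 0 < b := lt_of_lt_of_le ha hab
  have hs : 0 < a + b := by linarith
  obtain ⟨h1, h2⟩ := hl
  have key : 1 - lam / ((a + b) / 2) = ((a + b) - 2 * lam) / (a + b) := by
    field_simp
  rw [key, abs_le]
  constructor
  · rw [show -((b - a) / (a + b)) = (-(b - a)) / (a + b) from (neg_div _ _).symm,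
      div_le_div_iff₀ hs hs]
    nlinarith
  · rw [div_le_div_iff₀ hs hs]; nlinarith

lemma aux_eq_iff (a b : ℝ) (ha : 0 < a) (hab : a ≤ b) (r : ℝ) (hr : 0 < r) :
    max |1 - a / r| |1 - b / r| = (b - a) / (a + b) ↔ r = (a + b) / 2 := by
  have hb : 0 < b := lt_of_lt_of_le ha hab
  have hs : 0 < a + b := by linarith
  constructor
  · intro h
    by_contra hne
    rcases lt_or_gt_of_ne hne with hlt | hgt
    · have h1 : b / ((a + b) / 2) < b / r := div_lt_div_of_pos_left hb hr hlt
      have h2 : b / ((a + b) / 2) = 2 * b / (a + b) := by field_simp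
      have h3 : (b - a) / (a + b) = 2 * b / (a + b) - 1 := by field_simp; ring
      have hfin : (b - a) / (a + b) < |1 - b / r| := by
        calc (b - a) / (a + b) = 2 * b / (a + b) - 1 := h3
          _ < b / r - 1 := by rw [h2] at h1; linarith
          _ ≤ |b / r - 1| := le_abs_self _
          _ = |1 - b / r| := by rw [abs_sub_comm]
      have := lt_of_lt_of_le hfin (le_max_right |1 - a / r| _)
      rw [h] at this; exact lt_irrefl _ this
    · have h1 : a / r < a / ((a + b) / 2) := div_lt_div_of_pos_left ha (by linarith) hgt
      have h2 : a / ((a + b) / 2) = 2 * a / (a + b) := by field_simp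
      have h3 : (b - a) / (a + b) = 1 - 2 * a / (a + b) := by field_simp; ring
      have hfin : (b - a) / (a + b) < |1 - a / r| := by
        calc (b - a) / (a + b) = 1 - 2 * a / (a + b) := h3
          _ < 1 - a / r := by rw [h2] at h1; linarith
          _ ≤ |1 - a / r| := le_abs_self _
      have := lt_of_lt_of_le hfin (le_max_left _ |1 - b / r|)
      rw [h] at this; exact lt_irrefl _ this
  · rintro rfl
    apply le_antisymm
    · apply max_le
      · exact aux_icc a b ha hab a ⟨le_refl a, hab⟩
      · exact aux_icc a b ha hab b ⟨hab, le_refl b⟩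
    · exact aux_lb a b ha hab _ (by linarith)

/-- Optimal step size for average consensus.  For `0 < a ≤ b`: every `r > 0` satisfies
`max {|1 - a/r|, |1 - b/r|} ≥ (b-a)/(a+b)` with equality iff `r = (a+b)/2`; moreover
`|1 - λ/r*| ≤ (b-a)/(a+b)` for `r* = (a+b)/2` and every `λ ∈ [a,b]`.  Consequently,
if `0 < λ_2 ≤ … ≤ λ_N` are the nonzero Laplacian eigenvalues of a connected graph,
the minimizer of `r ↦ max_i |1 - λ_i/r|` over `r > 0` is `r* = (λ_N + λ_2)/2`, with
optimal value `ρ* = (λ_N - λ_2)/(λ_N + λ_2)`. -/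
theorem optimal_consensus_stepsize (a b : ℝ) (ha : 0 < a) (hab : a ≤ b) :
    (∀ r : ℝ, 0 < r → (b - a) / (a + b) ≤ max |1 - a / r| |1 - b / r|) ∧
    (∀ r : ℝ, 0 < r →
      (max |1 - a / r| |1 - b / r| = (b - a) / (a + b) ↔ r = (a + b) / 2)) ∧
    (∀ lam : ℝ, lam ∈ Set.Icc a b → |1 - lam / ((a + b) / 2)| ≤ (b - a) / (a + b)) ∧
    (∀ (n : ℕ) (lam : Fin (n + 1) → ℝ), Monotone lam → 0 < lam 0 →
      (∀ r : ℝ, 0 < r →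
        (lam (Fin.last n) - lam 0) / (lam (Fin.last n) + lam 0) ≤
          Finset.univ.sup' Finset.univ_nonempty (fun i => |1 - lam i / r|)) ∧
      Finset.univ.sup' Finset.univ_nonempty
          (fun i => |1 - lam i / ((lam (Fin.last n) + lam 0) / 2)|) =
        (lam (Fin.last n) - lam 0) / (lam (Fin.last n) + lam 0) ∧
      (∀ r : ℝ, 0 < r →
        Finset.univ.sup' Finset.univ_nonempty (fun i => |1 - lam i / r|) =
          (lam (Fin.last n) - lam 0) / (lam (Fin.last n) + lam 0) →
        r = (lam (Fin.last n) + lam 0) / 2)) := by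
  refine ⟨fun r hr => aux_lb a b ha hab r hr, fun r hr => aux_eq_iff a b ha hab r hr,
    fun lam hl => aux_icc a b ha hab lam hl, ?_⟩
  intro n lam hmono h0
  set A := lam 0 with hA
  set B := lam (Fin.last n) with hB
  have hAB : A ≤ B := hmono (Fin.zero_le _)
  have hicc : ∀ i, lam i ∈ Set.Icc A B := fun i =>
    ⟨hmono (Fin.zero_le i), hmono (Fin.le_last i)⟩
  have hcomm : (B - A) / (B + A) = (B - A) / (A + B) := by rw [add_comm]
  have hcomm2 : (B + A) / 2 = (A + B) / 2 := by rw [add_comm]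
  have hmax_le_sup : ∀ r : ℝ,
      max |1 - A / r| |1 - B / r| ≤
        Finset.univ.sup' Finset.univ_nonempty (fun i => |1 - lam i / r|) := by
    intro r
    apply max_le
    · exact Finset.le_sup' (fun i => |1 - lam i / r|) (Finset.mem_univ 0)
    · exact Finset.le_sup' (fun i => |1 - lam i / r|) (Finset.mem_univ (Fin.last n))
  have hlb : ∀ r : ℝ, 0 < r → (B - A) / (B + A) ≤
      Finset.univ.sup' Finset.univ_nonempty (fun i => |1 - lam i / r|) := by
    intro r hr
    rw [hcomm]
    exact le_trans (aux_lb A B h0 hAB r hr) (hmax_le_sup r)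
  refine ⟨hlb, ?_, ?_⟩
  · apply le_antisymm
    · apply Finset.sup'_le
      intro i _
      rw [hcomm, hcomm2]
      exact aux_icc A B h0 hAB (lam i) (hicc i)
    · exact hlb _ (by have hBpos : 0 < B := lt_of_lt_of_le h0 hAB; linarith)
  · intro r hr hsup
    have h1 : max |1 - A / r| |1 - B / r| ≤ (B - A) / (A + B) := by
      rw [← hcomm, ← hsup]; exact hmax_le_sup r
    have h2 : (B - A) / (A + B) ≤ max |1 - A / r| |1 - B / r| :=
      aux_lb A B h0 hAB r hr
    rw [hcomm2]
    exact (aux_eq_iff A B h0 hAB r hr).mp (le_antisymm h1 h2)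
end

section
/- Let H : ℝ → ℝ^{N×N} be a differentiable family of real symmetric matrices, and suppose λ : ℝ → ℝ and u : ℝ → ℝ^N are differentiable functions such that H(x)·u(x) = λ(x)·u(x) and ‖u(x)‖ = 1 for all x in an open interval. Then for every x in that interval, λ'(x) = u(x)ᵀ·H'(x)·u(x), where H'(x) is the entrywise derivative of H at x. -/
open Matrix

/-!
Differentiate the Rayleigh quotient `λ = uᵀ H u`, which holds on the interval since `uᵀ u = 1`.
The two terms involving `u'` are `λ u'ᵀ u` (using `H u = λ u` and the symmetry of `H`), and
`u'ᵀ u = 0` because `uᵀ u` is constant; only `uᵀ H' u` survives.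
-/

open Filter Topology

section

variable {𝕜 : Type*} [NontriviallyNormedField 𝕜] {ι κ : Type*} [Fintype ι]

theorem hasDerivAt_dotProduct {v w : 𝕜 → ι → 𝕜} {v' w' : ι → 𝕜} {x : 𝕜}
    (hv : ∀ i, HasDerivAt (fun t => v t i) (v' i) x)
    (hw : ∀ i, HasDerivAt (fun t => w t i) (w' i) x) :
    HasDerivAt (fun t => v t ⬝ᵥ w t) (v' ⬝ᵥ w x + v x ⬝ᵥ w') x := by
  simpa [dotProduct, Finset.sum_add_distrib] using
    HasDerivAt.fun_sum (u := Finset.univ) fun i _ => (hv i).mul (hw i)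

theorem hasDerivAt_mulVec {M : 𝕜 → Matrix κ ι 𝕜} {M' : Matrix κ ι 𝕜} {w : 𝕜 → ι → 𝕜}
    {w' : ι → 𝕜} {x : 𝕜} (hM : ∀ k i, HasDerivAt (fun t => M t k i) (M' k i) x)
    (hw : ∀ i, HasDerivAt (fun t => w t i) (w' i) x) (k : κ) :
    HasDerivAt (fun t => (M t *ᵥ w t) k) ((M' *ᵥ w x + M x *ᵥ w') k) x :=
  hasDerivAt_dotProduct (hM k) hw

theorem dotProduct_eq_zero_of_hasDerivAt_of_eventually_dotProduct_self_eq [CharZero 𝕜]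
    {u : 𝕜 → ι → 𝕜} {u' : ι → 𝕜} {x c : 𝕜} (hu : ∀ i, HasDerivAt (fun t => u t i) (u' i) x)
    (hc : ∀ᶠ t in 𝓝 x, u t ⬝ᵥ u t = c) :
    u x ⬝ᵥ u' = 0 := by
  have h := (hasDerivAt_dotProduct hu hu).unique ((hasDerivAt_const x c).congr_of_eventuallyEq hc)
  rw [dotProduct_comm u', ← two_mul] at h
  exact (mul_eq_zero.mp h).resolve_left two_ne_zero

end

theorem Matrix.IsSymm.dotProduct_mulVec_eq_zero {R ι : Type*} [CommSemiring R] [Fintype ι]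
    {A : Matrix ι ι R} (hA : A.IsSymm) {v w : ι → R} {μ : R} (hv : A *ᵥ v = μ • v)
    (hvw : v ⬝ᵥ w = 0) : v ⬝ᵥ (A *ᵥ w) = 0 := by
  rw [dotProduct_mulVec, ← mulVec_transpose, hA.eq, hv, smul_dotProduct, hvw, smul_zero]

theorem hasDerivAt_eigenvalue_of_isSymm {𝕜 ι : Type*} [NontriviallyNormedField 𝕜] [CharZero 𝕜]
    [Fintype ι] {H : 𝕜 → Matrix ι ι 𝕜} {H' : Matrix ι ι 𝕜} {lam : 𝕜 → 𝕜} {u : 𝕜 → ι → 𝕜}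
    {u' : ι → 𝕜} {x : 𝕜} (hsymm : (H x).IsSymm)
    (hH : ∀ i j, HasDerivAt (fun t => H t i j) (H' i j) x)
    (hu : ∀ i, HasDerivAt (fun t => u t i) (u' i) x)
    (heig : ∀ᶠ t in 𝓝 x, H t *ᵥ u t = lam t • u t) (hnorm : ∀ᶠ t in 𝓝 x, u t ⬝ᵥ u t = 1) :
    HasDerivAt lam (u x ⬝ᵥ (H' *ᵥ u x)) x := by
  have horth : u x ⬝ᵥ u' = 0 :=
    dotProduct_eq_zero_of_hasDerivAt_of_eventually_dotProduct_self_eq hu hnorm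
  have hrayleigh : (fun t => u t ⬝ᵥ (H t *ᵥ u t)) =ᶠ[𝓝 x] lam := by
    filter_upwards [heig, hnorm] with t heig_t hnorm_t
    rw [heig_t, dotProduct_smul, hnorm_t, smul_eq_mul, mul_one]
  have hq := (hasDerivAt_dotProduct hu (hasDerivAt_mulVec hH hu)).congr_of_eventuallyEq
    hrayleigh.symm
  have hderiv : u' ⬝ᵥ (H x *ᵥ u x) + u x ⬝ᵥ (H' *ᵥ u x + H x *ᵥ u') = u x ⬝ᵥ (H' *ᵥ u x) := by
    rw [dotProduct_add, hsymm.dotProduct_mulVec_eq_zero heig.self_of_nhds horth,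
      heig.self_of_nhds, dotProduct_smul, dotProduct_comm u', horth, smul_zero, zero_add, add_zero]
  exact hderiv ▸ hq

theorem eigenvalue_derivative_formula_general
    {N : ℕ} (H H' : ℝ → Matrix (Fin N) (Fin N) ℝ)
    (lam lam' : ℝ → ℝ) (u u' : ℝ → Fin N → ℝ)
    (a b : ℝ)
    (hsymm : ∀ x ∈ Set.Ioo a b, (H x).IsSymm)
    (hH : ∀ x ∈ Set.Ioo a b, ∀ i j, HasDerivAt (fun t => H t i j) (H' x i j) x)
    (hlam : ∀ x ∈ Set.Ioo a b, HasDerivAt lam (lam' x) x)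
    (hu : ∀ x ∈ Set.Ioo a b, ∀ i, HasDerivAt (fun t => u t i) (u' x i) x)
    (heig : ∀ x ∈ Set.Ioo a b, H x *ᵥ u x = lam x • u x)
    (hnorm : ∀ x ∈ Set.Ioo a b, ∑ i, (u x i) ^ 2 = 1) :
    ∀ x ∈ Set.Ioo a b, lam' x = u x ⬝ᵥ (H' x *ᵥ u x) := by
  intro x hx
  have hnhds : Set.Ioo a b ∈ 𝓝 x := isOpen_Ioo.mem_nhds hx
  refine (hlam x hx).unique (hasDerivAt_eigenvalue_of_isSymm (hsymm x hx) (hH x hx) (hu x hx) ?_ ?_)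
  · filter_upwards [hnhds] using heig
  · filter_upwards [hnhds] with t ht
    simpa [dotProduct, sq] using hnorm t ht

/-- Derivative of an eigenvalue of a differentiable family of real symmetric matrices
(Magnus): if `H(x) u(x) = λ(x) u(x)` with `‖u(x)‖ = 1` on an open interval, with `H`,
`λ`, `u` differentiable, then `λ'(x) = u(x)ᵀ H'(x) u(x)` on that interval. -/
theorem eigenvalue_derivative_formula
    {N : ℕ} (H H' : ℝ → Matrix (Fin N) (Fin N) ℝ)
    (lam lam' : ℝ → ℝ) (u u' : ℝ → Fin N → ℝ)
    (a b : ℝ) (hab : a < b)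
    (hsymm : ∀ x ∈ Set.Ioo a b, (H x).IsSymm)
    (hH : ∀ x ∈ Set.Ioo a b, ∀ i j, HasDerivAt (fun t => H t i j) (H' x i j) x)
    (hlam : ∀ x ∈ Set.Ioo a b, HasDerivAt lam (lam' x) x)
    (hu : ∀ x ∈ Set.Ioo a b, ∀ i, HasDerivAt (fun t => u t i) (u' x i) x)
    (heig : ∀ x ∈ Set.Ioo a b, H x *ᵥ u x = lam x • u x)
    (hnorm : ∀ x ∈ Set.Ioo a b, ∑ i, (u x i) ^ 2 = 1) :
    ∀ x ∈ Set.Ioo a b, lam' x = u x ⬝ᵥ (H' x *ᵥ u x) :=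
  eigenvalue_derivative_formula_general H H' lam lam' u u' a b hsymm hH hlam hu heig hnorm
end
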